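/- arXiv:2601.01165 — 2 statements merged into one kernel-verified Lean document; each statement's English description precedes it below -/
import Mathlib

section
/- Let d = 3 and suppose q = (q̄, q_n(q̄)) is a normalized central configuration, with q_i = (x_i, y_i, z_i). Then 0 = Σ_{i=1}^{n−1} ( −x_i · ∂F^red/∂z_i(q̄) + z_i · ∂F^red/∂x_i(q̄) ), an identity among the columns of the Jacobian matrix DF^red(q̄). -/
open scoped BigOperators

noncomputable section

/-- Points in `ℝ^d`, with the Euclidean norm. -/
abbrev Pt (d : ℕ) := EuclideanSpace ℝ (Fin d)

/-- `F_i(q) = −q_i + Σ_{j ≠ i} m_j (q_j − q_i)/‖q_j − q_i‖³`. -/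
noncomputable def nbodyF {d n : ℕ} (m : Fin n → ℝ) (q : Fin n → Pt d) : Fin n → Pt d :=
  fun i => -q i + ∑ j ∈ Finset.univ.erase i, (m j / ‖q j - q i‖ ^ 3) • (q j - q i)

/-- A configuration is collision-free if all bodies occupy distinct positions. -/
def CollisionFree {d n : ℕ} (q : Fin n → Pt d) : Prop :=
  ∀ i j, i ≠ j → q i ≠ q j

/-- A normalized central configuration: collision-free, center of mass at the origin,
and `F(q) = 0`. -/
def IsNCC {d n : ℕ} (m : Fin n → ℝ) (q : Fin n → Pt d) : Prop :=
  CollisionFree q ∧ (∑ i, m i • q i) = 0 ∧ nbodyF m q = 0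

/-- Embedding of the reduced index set `{1,…,n−1}` into `{1,…,n}`. -/
def emb {n : ℕ} (i : Fin (n - 1)) : Fin n := Fin.castLE (Nat.sub_le n 1) i

/-- Extend a reduced configuration `q̄ = (q_1,…,q_{n−1})` by the position of the last body,
`q_n(q̄) = −(1/m_n) Σ_{i<n} m_i q_i`, computed from the center of mass condition. -/
noncomputable def extendConfig {d n : ℕ} (m : Fin n → ℝ) (qbar : Fin (n - 1) → Pt d) :
    Fin n → Pt d :=
  fun i => if h : (i : ℕ) < n - 1 then qbar ⟨i, h⟩
    else (-(1 / m i)) • ∑ j : Fin (n - 1), m (emb j) • qbar j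

/-- The center-of-mass reduced map `F^red_i(q̄) = F_i(q_1,…,q_{n−1},q_n(q̄))`, `i = 1,…,n−1`. -/
noncomputable def Fred {d n : ℕ} (m : Fin n → ℝ) (qbar : Fin (n - 1) → Pt d) :
    Fin (n - 1) → Pt d :=
  fun i => nbodyF m (extendConfig m qbar) (emb i)

/-- The Jacobian matrix of `F`, rows and columns indexed by (body, coordinate). -/
noncomputable def jacF {d n : ℕ} (m : Fin n → ℝ) (q : Fin n → Pt d) :
    Matrix (Fin n × Fin d) (Fin n × Fin d) ℝ :=
  fun p p' =>
    fderiv ℝ (fun q' : Fin n → Pt d => nbodyF m q' p.1 p.2) q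
      (Pi.single p'.1 (EuclideanSpace.single p'.2 (1 : ℝ)))

/-- The Jacobian matrix of `F^red`, rows and columns indexed by (body, coordinate). -/
noncomputable def jacFred {d n : ℕ} (m : Fin n → ℝ) (qbar : Fin (n - 1) → Pt d) :
    Matrix (Fin (n - 1) × Fin d) (Fin (n - 1) × Fin d) ℝ :=
  fun p p' =>
    fderiv ℝ (fun q' : Fin (n - 1) → Pt d => Fred m q' p.1 p.2) qbar
      (Pi.single p'.1 (EuclideanSpace.single p'.2 (1 : ℝ)))

-- auxiliary lemmas to insert above stmt6

open Real in
private def rotL (θ : ℝ) : Pt 3 →ₗ[ℝ] Pt 3 where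
  toFun p := WithLp.toLp 2 (fun c => if c = 0 then Real.cos θ * p 0 + Real.sin θ * p 2
      else if c = 2 then -Real.sin θ * p 0 + Real.cos θ * p 2 else p 1 : Fin 3 → ℝ)
  map_add' a b := by
    ext c
    simp only [PiLp.add_apply]
    fin_cases c <;> simp <;> ring
  map_smul' r a := by
    ext c
    simp only [PiLp.smul_apply, RingHom.id_apply, smul_eq_mul]
    fin_cases c <;> simp <;> ring

private lemma rotL_apply (θ : ℝ) (p : Pt 3) (c : Fin 3) :
    rotL θ p c = if c = 0 then Real.cos θ * p 0 + Real.sin θ * p 2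
      else if c = 2 then -Real.sin θ * p 0 + Real.cos θ * p 2 else p 1 := rfl

private lemma rotL_norm (θ : ℝ) (p : Pt 3) : ‖rotL θ p‖ = ‖p‖ := by
  rw [EuclideanSpace.norm_eq, EuclideanSpace.norm_eq]
  congr 1
  rw [Fin.sum_univ_three, Fin.sum_univ_three]
  simp only [rotL_apply, Real.norm_eq_abs, sq_abs]
  norm_num [Fin.ext_iff]
  nlinarith [Real.sin_sq_add_cos_sq θ]

private lemma rotL_zero_apply (p : Pt 3) : rotL 0 p = p := by
  ext c
  rw [rotL_apply]
  fin_cases c <;> simp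

private lemma nbody_equiv {n : ℕ} (m : Fin n → ℝ) (q : Fin n → Pt 3) (θ : ℝ) (i : Fin n) :
    nbodyF m (fun j => rotL θ (q j)) i = rotL θ (nbodyF m q i) := by
  unfold nbodyF
  rw [map_add, map_neg, map_sum]
  congr 1
  refine Finset.sum_congr rfl fun j hj => ?_
  rw [map_smul, ← map_sub, rotL_norm]

private lemma extend_equiv {n : ℕ} (m : Fin n → ℝ) (qbar : Fin (n-1) → Pt 3) (θ : ℝ) :
    extendConfig m (fun j => rotL θ (qbar j)) = fun i => rotL θ (extendConfig m qbar i) := by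
  funext i
  unfold extendConfig
  split
  · rfl
  · rw [map_smul, map_sum]
    congr 1
    exact Finset.sum_congr rfl fun j _ => (map_smul _ _ _).symm

private lemma Fred_equiv {n : ℕ} (m : Fin n → ℝ) (qbar : Fin (n-1) → Pt 3) (θ : ℝ)
    (i : Fin (n-1)) :
    Fred m (fun j => rotL θ (qbar j)) i = rotL θ (Fred m qbar i) := by
  unfold Fred
  rw [extend_equiv, nbody_equiv]

private lemma ext_diff {d n : ℕ} (m : Fin n → ℝ) (i : Fin n) :
    Differentiable ℝ (fun q' : Fin (n-1) → Pt d => extendConfig m q' i) := by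
  unfold extendConfig
  split
  · exact (ContinuousLinearMap.proj (R := ℝ) (φ := fun _ : Fin (n-1) => Pt d) _).differentiable
  · exact Differentiable.const_smul (Differentiable.fun_sum fun j _ =>
      ((ContinuousLinearMap.proj (R := ℝ) (φ := fun _ : Fin (n-1) => Pt d)
        j).differentiable).const_smul (m (emb j))) (-(1 / m i))

private lemma gv_diff {d n : ℕ} (m : Fin n → ℝ) (qbar : Fin (n-1) → Pt d)
    (hcf : ∀ i j, i ≠ j → extendConfig m qbar i ≠ extendConfig m qbar j) (k : Fin n) :
    DifferentiableAt ℝ (fun q' : Fin (n-1) → Pt d => nbodyF m (extendConfig m q') k) qbar := by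
  unfold nbodyF
  apply DifferentiableAt.add
  · exact ((ext_diff m k) qbar).neg
  · apply DifferentiableAt.fun_sum
    intro j hj
    have hjk : j ≠ k := Finset.ne_of_mem_erase hj
    have hu : DifferentiableAt ℝ
        (fun q' : Fin (n-1) → Pt d => extendConfig m q' j - extendConfig m q' k) qbar :=
      ((ext_diff m j) qbar).sub ((ext_diff m k) qbar)
    have hne : extendConfig m qbar j - extendConfig m qbar k ≠ 0 :=
      sub_ne_zero_of_ne (hcf j k hjk)
    have hnorm : DifferentiableAt ℝ
        (fun q' : Fin (n-1) → Pt d => ‖extendConfig m q' j - extendConfig m q' k‖) qbar :=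
      hu.norm ℝ hne
    have hpow : DifferentiableAt ℝ
        (fun q' : Fin (n-1) → Pt d => ‖extendConfig m q' j - extendConfig m q' k‖ ^ 3) qbar :=
      hnorm.pow 3
    have hden : (‖extendConfig m qbar j - extendConfig m qbar k‖ : ℝ) ^ 3 ≠ 0 :=
      pow_ne_zero 3 (norm_ne_zero_iff.mpr hne)
    simp only [div_eq_mul_inv]
    exact ((hpow.inv hden).const_mul (m j)).smul hu

/-- Infinitesimal generator of the rotation. -/
private def Ap (p : Pt 3) : Pt 3 :=
  WithLp.toLp 2 (fun c => if c = 0 then p 2 else if c = 2 then -(p 0) else 0 : Fin 3 → ℝ)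

private lemma rot_hasDerivAt (p : Pt 3) : HasDerivAt (fun θ => rotL θ p) (Ap p) 0 := by
  have hf : HasDerivAt
      (fun θ => (fun c => if c = 0 then Real.cos θ * p 0 + Real.sin θ * p 2
        else if c = 2 then -Real.sin θ * p 0 + Real.cos θ * p 2 else p 1 : Fin 3 → ℝ))
      (fun c => if c = 0 then p 2 else if c = 2 then -(p 0) else 0 : Fin 3 → ℝ) 0 := by
    rw [hasDerivAt_pi]
    intro c
    fin_cases c
    · have := ((Real.hasDerivAt_cos 0).mul_const (p 0)).add
        ((Real.hasDerivAt_sin 0).mul_const (p 2))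
      convert this using 1 <;> simp [Pi.add_def]
    · simpa using hasDerivAt_const (0 : ℝ) (p 1)
    · have := (((Real.hasDerivAt_sin 0).neg).mul_const (p 0)).add
        ((Real.hasDerivAt_cos 0).mul_const (p 2))
      convert this using 1 <;> simp [Pi.add_def]
  have h2 := (PiLp.continuousLinearEquiv 2 ℝ
    (fun _ : Fin 3 => ℝ)).symm.hasFDerivAt.comp_hasDerivAt 0 hf
  exact h2

/-- `0 = Σ_i (−x_i ∂F^red/∂z_i + z_i ∂F^red/∂x_i)`
as an identity among the columns of `DF^red(q̄)` (here `x = 0`, `z = 2`). -/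
theorem stmt6 {n : ℕ} (hn : 3 ≤ n) (m : Fin n → ℝ) (hm : ∀ i, 0 < m i)
    (qbar : Fin (n - 1) → Pt 3) (hcc : IsNCC m (extendConfig m qbar)) :
    ∀ p : Fin (n - 1) × Fin 3,
      ∑ i : Fin (n - 1),
        (-(qbar i 0) * jacFred m qbar p (i, 2) + qbar i 2 * jacFred m qbar p (i, 0)) = 0 := by
  intro p
  set g : (Fin (n-1) → Pt 3) → ℝ := fun q' : Fin (n - 1) → Pt 3 => Fred m q' p.1 p.2 with hg_def
  -- differentiability of g at qbar
  have hgv : DifferentiableAt ℝ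
      (fun q' : Fin (n-1) → Pt 3 => nbodyF m (extendConfig m q') (emb p.1)) qbar :=
    gv_diff m qbar hcc.1 (emb p.1)
  have hgd : DifferentiableAt ℝ g qbar := by
    have h2 := (EuclideanSpace.proj (𝕜 := ℝ) p.2).differentiableAt.comp qbar hgv
    exact h2
  set G : (Fin (n-1) → Pt 3) →L[ℝ] ℝ := fderiv ℝ g qbar with hG_def
  have hG : HasFDerivAt g G qbar := hgd.hasFDerivAt
  -- the rotation curve
  set c : ℝ → (Fin (n-1) → Pt 3) := fun θ i => rotL θ (qbar i) with hc_def
  set v : Fin (n-1) → Pt 3 := fun i => Ap (qbar i) with hv_def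
  have hc : HasDerivAt c v 0 := hasDerivAt_pi.mpr fun i => rot_hasDerivAt (qbar i)
  have hc0 : c 0 = qbar := by funext i; exact rotL_zero_apply (qbar i)
  have hG' : HasFDerivAt g G (c 0) := hc0 ▸ hG
  -- g ∘ c is identically zero
  have hF0 : Fred m qbar p.1 = 0 := by
    unfold Fred
    rw [hcc.2.2]
    rfl
  have hgc : (g ∘ c) = fun _ => (0 : ℝ) := by
    funext θ
    show Fred m (fun i => rotL θ (qbar i)) p.1 p.2 = 0
    rw [Fred_equiv, hF0, map_zero]
    rfl
  have h1 : HasDerivAt (g ∘ c) (G v) 0 := hG'.comp_hasDerivAt 0 hc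
  rw [hgc] at h1
  have hGv : G v = 0 := h1.unique (hasDerivAt_const 0 0)
  -- express jac entries through G
  have hjac : ∀ (i : Fin (n-1)) (cc : Fin 3),
      jacFred m qbar p (i, cc) = G (Pi.single i (EuclideanSpace.single cc 1)) := by
    intro i cc
    show fderiv ℝ (fun q' : Fin (n - 1) → Pt 3 => Fred m q' p.1 p.2) qbar
      (Pi.single i (EuclideanSpace.single cc 1)) = _
    rfl
  -- decompose v into single columns
  have hsingle : ∀ i : Fin (n-1),
      (-(qbar i 0)) • (Pi.single i (EuclideanSpace.single (2 : Fin 3) (1:ℝ)) : Fin (n-1) → Pt 3)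
        + (qbar i 2) • (Pi.single i (EuclideanSpace.single (0 : Fin 3) (1:ℝ)) : Fin (n-1) → Pt 3)
      = Pi.single i (v i) := by
    intro i
    have hAp : (-(qbar i 0)) • EuclideanSpace.single (2:Fin 3) (1:ℝ)
        + (qbar i 2) • EuclideanSpace.single (0:Fin 3) (1:ℝ) = v i := by
      ext cc
      simp only [PiLp.add_apply, PiLp.smul_apply, EuclideanSpace.single_apply, smul_eq_mul]
      fin_cases cc <;> simp [hv_def, Ap]
    rw [← Pi.single_smul, ← Pi.single_smul, ← Pi.single_add, hAp]
  calc ∑ i : Fin (n - 1),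
        (-(qbar i 0) * jacFred m qbar p (i, 2) + qbar i 2 * jacFred m qbar p (i, 0))
      = ∑ i : Fin (n-1), G ((-(qbar i 0)) • (Pi.single i (EuclideanSpace.single (2:Fin 3) (1:ℝ)) : Fin (n-1) → Pt 3)
          + (qbar i 2) • (Pi.single i (EuclideanSpace.single (0:Fin 3) (1:ℝ)) : Fin (n-1) → Pt 3)) := by
        refine Finset.sum_congr rfl fun i _ => ?_
        rw [map_add, map_smul, map_smul, hjac, hjac, smul_eq_mul, smul_eq_mul]
    _ = G (∑ i : Fin (n-1), Pi.single i (v i)) := by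
        rw [map_sum]
        exact Finset.sum_congr rfl fun i _ => by rw [hsingle i]
    _ = G v := by rw [Finset.univ_sum_single]
    _ = 0 := hGv
end
end

section
/- Let d = 2 and suppose q = (q̄, q_n(q̄)) is a normalized central configuration, with q_i = (x_i, y_i). Then 0 = Σ_{i=1}^{n−1} m_i ( (x_i − x_n) DF^red_{i,y}(q̄) − (y_i − y_n) DF^red_{i,x}(q̄) ), an identity among the rows of the Jacobian matrix DF^red(q̄). -/
open scoped BigOperators

noncomputable section

section Helpers

lemma pil_sum_apply {d : ℕ} {ι : Type*} (s : Finset ι) (f : ι → Pt d) (k : Fin d) :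
    (∑ x ∈ s, f x) k = ∑ x ∈ s, f x k :=
  by rw [WithLp.ofLp_sum, Finset.sum_apply]

lemma nbodyF_apply {d n : ℕ} (m : Fin n → ℝ) (Q : Fin n → Pt d) (j : Fin n) (k : Fin d) :
    nbodyF m Q j k
      = -Q j k + ∑ l ∈ Finset.univ.erase j, (m l / ‖Q l - Q j‖ ^ 3) * (Q l k - Q j k) := by
  simp only [nbodyF, PiLp.add_apply, PiLp.neg_apply, pil_sum_apply, PiLp.smul_apply,
    PiLp.sub_apply, smul_eq_mul]

lemma skew_sum_zero {ι : Type*} [Fintype ι] [DecidableEq ι] (t : ι → ι → ℝ)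
    (h : ∀ j k, t j k = - t k j) :
    ∑ j, ∑ k ∈ Finset.univ.erase j, t j k = 0 := by
  have hswap : ∑ j, ∑ k ∈ Finset.univ.erase j, t j k
      = ∑ k, ∑ j ∈ Finset.univ.erase k, t j k := by
    apply Finset.sum_comm'
    intro x y
    simp [Finset.mem_erase, eq_comm, ne_comm]
  have hneg : ∑ j, ∑ k ∈ Finset.univ.erase j, t j k
      = - ∑ j, ∑ k ∈ Finset.univ.erase j, t j k := by
    nth_rewrite 1 [hswap]
    rw [← Finset.sum_neg_distrib]
    exact Finset.sum_congr rfl fun k _ => by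
      rw [← Finset.sum_neg_distrib]
      exact Finset.sum_congr rfl fun j _ => h j k
  linarith

/-- The total torque about any point `c` vanishes identically. -/
lemma torque_zero {n : ℕ} (m : Fin n → ℝ) (Q : Fin n → Pt 2) (c : Pt 2)
    (hQ0 : ∑ j, m j • Q j = 0) :
    ∑ j, m j * ((Q j 0 - c 0) * nbodyF m Q j 1 - (Q j 1 - c 1) * nbodyF m Q j 0) = 0 := by
  have hQk : ∀ k : Fin 2, ∑ j, m j * Q j k = 0 := by
    intro k
    have := congrArg (fun v : Pt 2 => v k) hQ0
    simpa [pil_sum_apply, PiLp.smul_apply, smul_eq_mul] using this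
  have hsplit : ∀ j : Fin n,
      m j * ((Q j 0 - c 0) * nbodyF m Q j 1 - (Q j 1 - c 1) * nbodyF m Q j 0)
      = (c 0 * (m j * Q j 1) - c 1 * (m j * Q j 0))
        + ∑ l ∈ Finset.univ.erase j,
            m j * (m l / ‖Q l - Q j‖ ^ 3) *
              ((Q j 0 - c 0) * (Q l 1 - c 1) - (Q j 1 - c 1) * (Q l 0 - c 0)) := by
    intro j
    rw [nbodyF_apply, nbodyF_apply]
    set S1 := ∑ l ∈ Finset.univ.erase j, (m l / ‖Q l - Q j‖ ^ 3) * (Q l 1 - Q j 1) with hS1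
    set S0 := ∑ l ∈ Finset.univ.erase j, (m l / ‖Q l - Q j‖ ^ 3) * (Q l 0 - Q j 0) with hS0
    have e1 : m j * ((Q j 0 - c 0) * (-Q j 1 + S1) - (Q j 1 - c 1) * (-Q j 0 + S0))
        = (c 0 * (m j * Q j 1) - c 1 * (m j * Q j 0))
          + ((m j * (Q j 0 - c 0)) * S1 - (m j * (Q j 1 - c 1)) * S0) := by ring
    rw [e1]
    congr 1
    rw [hS1, hS0, Finset.mul_sum, Finset.mul_sum, ← Finset.sum_sub_distrib]
    exact Finset.sum_congr rfl fun l _ => by ring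
  rw [Finset.sum_congr rfl fun j _ => hsplit j, Finset.sum_add_distrib]
  have h1 : ∑ j, (c 0 * (m j * Q j 1) - c 1 * (m j * Q j 0)) = 0 := by
    rw [Finset.sum_sub_distrib, ← Finset.mul_sum, ← Finset.mul_sum, hQk 0, hQk 1]
    ring
  have h2 : ∑ j, ∑ l ∈ Finset.univ.erase j,
      m j * (m l / ‖Q l - Q j‖ ^ 3) *
        ((Q j 0 - c 0) * (Q l 1 - c 1) - (Q j 1 - c 1) * (Q l 0 - c 0)) = 0 := by
    apply skew_sum_zero
    intro j l
    rw [norm_sub_rev]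
    ring
  rw [h1, h2, add_zero]

variable {n : ℕ}

lemma emb_val (i : Fin (n - 1)) : ((emb i : Fin n) : ℕ) = (i : ℕ) := rfl

lemma emb_inj : Function.Injective (emb (n := n)) := fun i j h =>
  Fin.ext (by rw [← emb_val i, ← emb_val j, h])

lemma map_emb (hn : 1 ≤ n) :
    (Finset.univ.map ⟨emb, emb_inj⟩ : Finset (Fin n))
      = Finset.univ.erase ⟨n - 1, by omega⟩ := by
  ext j
  simp only [Finset.mem_map, Finset.mem_univ, true_and, Finset.mem_erase,
    Function.Embedding.coeFn_mk, and_true]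
  constructor
  · rintro ⟨i, rfl⟩
    have := i.isLt
    intro h
    rw [Fin.ext_iff] at h
    simp only [emb_val] at h
    omega
  · intro h
    have h' : (j : ℕ) ≠ n - 1 := fun hh => h (Fin.ext hh)
    have hj : (j : ℕ) < n - 1 := by have := j.isLt; omega
    exact ⟨⟨j, hj⟩, Fin.ext (by simp [emb_val])⟩

lemma sum_erase_emb (hn : 1 ≤ n) {β : Type*} [AddCommMonoid β] (f : Fin n → β) :
    ∑ j ∈ Finset.univ.erase ⟨n - 1, by omega⟩, f j = ∑ i : Fin (n - 1), f (emb i) := by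
  rw [← map_emb hn, Finset.sum_map]
  rfl

lemma extend_emb {d : ℕ} (m : Fin n → ℝ) (q' : Fin (n - 1) → Pt d) (i : Fin (n - 1)) :
    extendConfig m q' (emb i) = q' i := by
  have h : ((emb i : Fin n) : ℕ) < n - 1 := i.isLt
  simp only [extendConfig, dif_pos h]
  congr 1

lemma extend_last {d : ℕ} (hn : 1 ≤ n) (m : Fin n → ℝ) (q' : Fin (n - 1) → Pt d) :
    extendConfig m q' ⟨n - 1, by omega⟩
      = (-(1 / m ⟨n - 1, by omega⟩)) • ∑ j : Fin (n - 1), m (emb j) • q' j := by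
  simp only [extendConfig, dif_neg (lt_irrefl (n - 1))]

lemma com_zero {d : ℕ} (hn : 1 ≤ n) (m : Fin n → ℝ)
    (hmL : m ⟨n - 1, by omega⟩ ≠ 0) (q' : Fin (n - 1) → Pt d) :
    ∑ j, m j • extendConfig m q' j = 0 := by
  rw [← Finset.sum_erase_add _ _ (Finset.mem_univ (⟨n - 1, by omega⟩ : Fin n))]
  rw [sum_erase_emb hn, extend_last hn m q']
  rw [smul_smul]
  have : m ⟨n - 1, by omega⟩ * (-(1 / m ⟨n - 1, by omega⟩)) = -1 := by
    field_simp
  rw [this]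
  simp only [extend_emb]
  simp

end Helpers

section Helpers2

variable {n : ℕ}

lemma g_zero (hn : 3 ≤ n) (m : Fin n → ℝ) (hm : ∀ i, 0 < m i) (q' : Fin (n - 1) → Pt 2) :
    ∑ i : Fin (n - 1), m (emb i) *
      ((q' i 0 - extendConfig m q' ⟨n - 1, Nat.sub_lt (by omega) one_pos⟩ 0) * Fred m q' i 1 -
        (q' i 1 - extendConfig m q' ⟨n - 1, Nat.sub_lt (by omega) one_pos⟩ 1) * Fred m q' i 0) = 0 := by
  have hn1 : 1 ≤ n := by omega
  have hcom := com_zero hn1 m (ne_of_gt (hm ⟨n - 1, by omega⟩)) q'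
  have htor := torque_zero m (extendConfig m q') (extendConfig m q' ⟨n - 1, by omega⟩) hcom
  rw [← Finset.sum_erase_add _ _ (Finset.mem_univ (⟨n - 1, by omega⟩ : Fin n))] at htor
  have hlast : m ⟨n - 1, by omega⟩ *
      ((extendConfig m q' ⟨n - 1, by omega⟩ 0 - extendConfig m q' ⟨n - 1, by omega⟩ 0) *
          nbodyF m (extendConfig m q') ⟨n - 1, by omega⟩ 1 -
        (extendConfig m q' ⟨n - 1, by omega⟩ 1 - extendConfig m q' ⟨n - 1, by omega⟩ 1) *
          nbodyF m (extendConfig m q') ⟨n - 1, by omega⟩ 0) = 0 := by ring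
  rw [hlast, add_zero, sum_erase_emb hn1] at htor
  refine Eq.trans ?_ htor
  refine Finset.sum_congr rfl fun i _ => ?_
  rw [extend_emb]
  rfl

lemma diff_coord (q₀ : Fin (n - 1) → Pt 2) (i : Fin (n - 1)) (k : Fin 2) :
    DifferentiableAt ℝ (fun q' : Fin (n - 1) → Pt 2 => q' i k) q₀ :=
  ((EuclideanSpace.proj k).comp
    (ContinuousLinearMap.proj (R := ℝ) (φ := fun _ : Fin (n - 1) => Pt 2) i)).differentiableAt

lemma diff_extend_coord (m : Fin n → ℝ) (q₀ : Fin (n - 1) → Pt 2) (j : Fin n) (k : Fin 2) :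
    DifferentiableAt ℝ (fun q' : Fin (n - 1) → Pt 2 => extendConfig m q' j k) q₀ := by
  by_cases h : (j : ℕ) < n - 1
  · simp only [extendConfig, dif_pos h]
    exact diff_coord q₀ _ k
  · simp only [extendConfig, dif_neg h]
    have he : (fun q' : Fin (n - 1) → Pt 2 => ((-(1 / m j)) • ∑ l, m (emb l) • q' l) k)
        = fun q' : Fin (n - 1) → Pt 2 => (-(1 / m j)) * ∑ l, m (emb l) * q' l k := by
      funext q'
      simp [PiLp.smul_apply, pil_sum_apply, smul_eq_mul]
    rw [he]
    exact (DifferentiableAt.fun_sum fun l _ => (diff_coord q₀ l k).const_mul _).const_mul _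

lemma diff_extend (m : Fin n → ℝ) (q₀ : Fin (n - 1) → Pt 2) :
    DifferentiableAt ℝ (fun q' : Fin (n - 1) → Pt 2 => extendConfig m q') q₀ := by
  rw [differentiableAt_pi]
  intro j
  by_cases h : (j : ℕ) < n - 1
  · simp only [extendConfig, dif_pos h]
    exact (ContinuousLinearMap.proj (R := ℝ) (φ := fun _ : Fin (n - 1) => Pt 2)
      ⟨j, h⟩).differentiableAt
  · simp only [extendConfig, dif_neg h]
    exact (DifferentiableAt.fun_sum fun l _ =>
      ((ContinuousLinearMap.proj (R := ℝ) (φ := fun _ : Fin (n - 1) => Pt 2)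
        l).differentiableAt.const_smul (m (emb l)))).const_smul (-(1 / m j))

lemma diff_nbody (m : Fin n → ℝ) (Q₀ : Fin n → Pt 2) (hcf : CollisionFree Q₀)
    (j : Fin n) (k : Fin 2) :
    DifferentiableAt ℝ (fun Q : Fin n → Pt 2 => nbodyF m Q j k) Q₀ := by
  have he : (fun Q : Fin n → Pt 2 => nbodyF m Q j k)
      = fun Q : Fin n → Pt 2 => -Q j k +
          ∑ l ∈ Finset.univ.erase j, m l * (‖Q l - Q j‖ ^ 3)⁻¹ * (Q l k - Q j k) := by
    funext Q
    rw [nbodyF_apply]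
    simp only [div_eq_mul_inv]
  rw [he]
  have hcoord : ∀ (l : Fin n), DifferentiableAt ℝ (fun Q : Fin n → Pt 2 => Q l k) Q₀ :=
    fun l => ((EuclideanSpace.proj k).comp
      (ContinuousLinearMap.proj (R := ℝ) (φ := fun _ : Fin n => Pt 2) l)).differentiableAt
  apply DifferentiableAt.add
  · exact (hcoord j).neg
  · apply DifferentiableAt.fun_sum
    intro l hl
    have hlj : l ≠ j := (Finset.mem_erase.mp hl).1
    have hne : Q₀ l - Q₀ j ≠ 0 := sub_ne_zero.mpr (hcf l j hlj)
    have hsub : DifferentiableAt ℝ (fun Q : Fin n → Pt 2 => Q l - Q j) Q₀ :=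
      ((ContinuousLinearMap.proj (R := ℝ) (φ := fun _ : Fin n => Pt 2) l).differentiableAt).sub
        ((ContinuousLinearMap.proj (R := ℝ) (φ := fun _ : Fin n => Pt 2) j).differentiableAt)
    have hnorm : DifferentiableAt ℝ (fun Q : Fin n → Pt 2 => ‖Q l - Q j‖) Q₀ :=
      hsub.norm ℝ hne
    have hpow : DifferentiableAt ℝ (fun Q : Fin n → Pt 2 => ‖Q l - Q j‖ ^ 3) Q₀ := hnorm.pow 3
    have hdenom : ‖Q₀ l - Q₀ j‖ ^ 3 ≠ 0 := pow_ne_zero 3 (norm_ne_zero_iff.mpr hne)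
    have hdiv : DifferentiableAt ℝ (fun Q : Fin n → Pt 2 => m l * (‖Q l - Q j‖ ^ 3)⁻¹) Q₀ :=
      (hpow.inv hdenom).const_mul (m l)
    exact hdiv.mul ((hcoord l).sub (hcoord j))

lemma diff_Fred (m : Fin n → ℝ) (qbar : Fin (n - 1) → Pt 2)
    (hcf : CollisionFree (extendConfig m qbar)) (i : Fin (n - 1)) (k : Fin 2) :
    DifferentiableAt ℝ (fun q' : Fin (n - 1) → Pt 2 => Fred m q' i k) qbar :=
  (diff_nbody m (extendConfig m qbar) hcf (emb i) k).comp qbar (diff_extend m qbar)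

end Helpers2

lemma jac_identity {n : ℕ} (hn : 3 ≤ n) (m : Fin n → ℝ) (hm : ∀ i, 0 < m i)
    (qbar : Fin (n - 1) → Pt 2) (hcc : IsNCC m (extendConfig m qbar))
    (w : Fin (n - 1) → Pt 2) :
    ∑ i : Fin (n - 1), m (emb i) *
      ((qbar i 0 - extendConfig m qbar ⟨n - 1, Nat.sub_lt (by omega) one_pos⟩ 0) *
          fderiv ℝ (fun q' => Fred m q' i 1) qbar w -
        (qbar i 1 - extendConfig m qbar ⟨n - 1, Nat.sub_lt (by omega) one_pos⟩ 1) *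
          fderiv ℝ (fun q' => Fred m q' i 0) qbar w) = 0 := by
  obtain ⟨hcf, hcom, hF0⟩ := hcc
  have hFval : ∀ (i : Fin (n - 1)) (k : Fin 2), Fred m qbar i k = 0 := by
    intro i k
    have h : Fred m qbar i = 0 := by rw [Fred, hF0]; rfl
    rw [h]; rfl
  have hA : ∀ (i : Fin (n - 1)) (k : Fin 2), DifferentiableAt ℝ
      (fun q' : Fin (n - 1) → Pt 2 => q' i k - extendConfig m q' ⟨n - 1, by omega⟩ k) qbar :=
    fun i k => (diff_coord qbar i k).sub (diff_extend_coord m qbar _ k)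
  have hFd : ∀ (i : Fin (n - 1)) (k : Fin 2),
      DifferentiableAt ℝ (fun q' : Fin (n - 1) → Pt 2 => Fred m q' i k) qbar :=
    fun i k => diff_Fred m qbar hcf i k
  have hterm : ∀ i : Fin (n - 1), HasFDerivAt
      (fun q' : Fin (n - 1) → Pt 2 => m (emb i) *
        ((q' i 0 - extendConfig m q' ⟨n - 1, by omega⟩ 0) * Fred m q' i 1 -
          (q' i 1 - extendConfig m q' ⟨n - 1, by omega⟩ 1) * Fred m q' i 0))
      (m (emb i) •
        (((qbar i 0 - extendConfig m qbar ⟨n - 1, by omega⟩ 0) •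
              fderiv ℝ (fun q' : Fin (n - 1) → Pt 2 => Fred m q' i 1) qbar
            + Fred m qbar i 1 •
              fderiv ℝ (fun q' : Fin (n - 1) → Pt 2 =>
                q' i 0 - extendConfig m q' ⟨n - 1, by omega⟩ 0) qbar)
          - ((qbar i 1 - extendConfig m qbar ⟨n - 1, by omega⟩ 1) •
              fderiv ℝ (fun q' : Fin (n - 1) → Pt 2 => Fred m q' i 0) qbar
            + Fred m qbar i 0 •
              fderiv ℝ (fun q' : Fin (n - 1) → Pt 2 =>
                q' i 1 - extendConfig m q' ⟨n - 1, by omega⟩ 1) qbar)))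
      qbar :=
    fun i =>
      ((((hA i 0).hasFDerivAt.mul (hFd i 1).hasFDerivAt).sub
        (((hA i 1).hasFDerivAt.mul (hFd i 0).hasFDerivAt))).const_mul (m (emb i)))
  have hsum := HasFDerivAt.fun_sum (fun (i : Fin (n - 1)) (_ : i ∈ Finset.univ) => hterm i)
  have hzero : (fun q' : Fin (n - 1) → Pt 2 => ∑ i : Fin (n - 1), m (emb i) *
      ((q' i 0 - extendConfig m q' ⟨n - 1, by omega⟩ 0) * Fred m q' i 1 -
        (q' i 1 - extendConfig m q' ⟨n - 1, by omega⟩ 1) * Fred m q' i 0))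
      = fun _ => (0 : ℝ) :=
    funext fun q' => g_zero hn m hm q'
  have h1 := hsum.fderiv
  rw [hzero] at h1
  rw [fderiv_const_apply] at h1
  have h2 := congrArg (fun T : (Fin (n - 1) → Pt 2) →L[ℝ] ℝ => T w) h1
  simp only [ContinuousLinearMap.zero_apply, ContinuousLinearMap.sum_apply,
    ContinuousLinearMap.smul_apply, ContinuousLinearMap.add_apply,
    ContinuousLinearMap.sub_apply, smul_eq_mul, hFval, zero_mul, add_zero] at h2
  linarith [h2]

/-- planar case: `0 = Σ_i m_i ((x_i − x_n) DF^red_{i,y} − (y_i − y_n) DF^red_{i,x})`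
as an identity among the rows of `DF^red(q̄)` (here `x = 0`, `y = 1`). -/
theorem stmt17 {n : ℕ} (hn : 3 ≤ n) (m : Fin n → ℝ) (hm : ∀ i, 0 < m i)
    (qbar : Fin (n - 1) → Pt 2) (hcc : IsNCC m (extendConfig m qbar)) :
    ∀ p : Fin (n - 1) × Fin 2,
      ∑ i : Fin (n - 1), m (emb i) *
        ((qbar i 0 - extendConfig m qbar ⟨n - 1, by omega⟩ 0) * jacFred m qbar (i, 1) p -
          (qbar i 1 - extendConfig m qbar ⟨n - 1, by omega⟩ 1) * jacFred m qbar (i, 0) p) = 0 := by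
  intro p
  have key := jac_identity hn m hm qbar hcc (Pi.single p.1 (EuclideanSpace.single p.2 (1 : ℝ)))
  simpa only [jacFred] using key
end
end
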